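/- With Ω the unique mean-zero solution of LΩ = ω, one has ⟨ω·Ω⟩ = (1/(2|S^d|)) ∬_{S^d×S^d} p(ω,ω')|Ω(ω) − Ω(ω')|² dω dω' > 0. In particular the diffusion coefficient ⟨ω·Ω⟩ is strictly positive. -/

import Mathlib

open MeasureTheory Metric Set
noncomputable section

/-- The unit sphere `S^d` lives in `E = ℝ^{d+1}` (Euclidean space). -/
abbrev Esp (d : ℕ) := EuclideanSpace ℝ (Fin (d+1))

/-- The surface measure on the unit sphere `S^d ⊂ ℝ^{d+1}`:
the `d`-dimensional Hausdorff measure restricted to the sphere. -/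
noncomputable def sphμ (d : ℕ) : Measure (Esp d) := (μH[(d : ℝ)]).restrict (Metric.sphere 0 1)

open scoped RealInnerProductSpace

/-!
Pairing `LΩ = ω` with `Ω` and symmetrising in `(ω, ω')` by the symmetry of `p` turns
`∫ ⟪ω, Ω ω⟫` into half of the Dirichlet form `∬ p ‖Ω ω - Ω ω'‖²`. Since `p > 0`, the Dirichlet
form vanishes only if `Ω ω = Ω ω'` for almost every pair, and then `LΩ = 0`, which is impossible
because `LΩ = ω` lies on the unit sphere. Dividing by `|S^d|` is legitimate because the surface
measure is finite (the sphere is covered by two stereographic charts, which are Lipschitz on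
compact sets) and positive (the orthogonal projection onto a hyperplane is `1`-Lipschitz and maps
the sphere onto a unit ball).
-/

open Module Function
open scoped ENNReal NNReal

section

variable {E F : Type*} [NormedAddCommGroup E] [NormedSpace ℝ E] [FiniteDimensional ℝ E]
  [MeasurableSpace E] [BorelSpace E]

theorem ContDiff.hausdorffMeasure_image_lt_top [NormedAddCommGroup F] [NormedSpace ℝ F]
    [MeasurableSpace F] [BorelSpace F] {f : E → F} (hf : ContDiff ℝ 1 f) {K : Set E}
    (hK : IsCompact K) : μH[finrank ℝ E] (f '' K) < ∞ := by
  obtain ⟨C, hC⟩ := hf.locallyLipschitz.locallyLipschitzOn.exists_lipschitzOnWith_of_compact hK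
  calc μH[finrank ℝ E] (f '' K) ≤ (C : ℝ≥0∞) ^ (finrank ℝ E : ℝ) * μH[finrank ℝ E] K :=
        hC.hausdorffMeasure_image_le (Nat.cast_nonneg _)
    _ < ∞ := ENNReal.mul_lt_top (by simp) hK.measure_lt_top

theorem LipschitzWith.hausdorffMeasure_pos_of_interior_image [EMetricSpace F]
    [MeasurableSpace F] [BorelSpace F] {K : ℝ≥0} {g : F → E} (hg : LipschitzWith K g)
    {s : Set F} (hs : (interior (g '' s)).Nonempty) : 0 < μH[finrank ℝ E] s := by
  have hpos : 0 < μH[finrank ℝ E] (g '' s) :=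
    (isOpen_interior.measure_pos _ hs).trans_le (measure_mono interior_subset)
  have := hpos.trans_le (hg.hausdorffMeasure_image_le (Nat.cast_nonneg _) s)
  exact pos_iff_ne_zero.2 fun h => by simp [h] at this

end

section

variable {E : Type*} [NormedAddCommGroup E] [InnerProductSpace ℝ E] {v : E}

theorem finrank_orthogonal_span_singleton_of_norm_eq_one {d : ℕ} (hd : finrank ℝ E = d + 1)
    (hv : ‖v‖ = 1) : finrank ℝ (ℝ ∙ v)ᗮ = d :=
  have : Fact (finrank ℝ E = d + 1) := ⟨hd⟩
  Submodule.finrank_orthogonal_span_singleton (by rintro rfl; simp at hv)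

theorem sphere_inter_inner_nonpos_subset (hv : ‖v‖ = 1) :
    sphere (0 : E) 1 ∩ {x | ⟪v, x⟫ ≤ 0} ⊆
      stereoInvFunAux v ∘ (↑) '' closedBall (0 : (ℝ ∙ v)ᗮ) 2 := by
  rintro x ⟨hx, hvx⟩
  have hxv : x ≠ v := by
    rintro rfl
    norm_num [real_inner_self_eq_norm_sq, hv] at hvx
  refine ⟨stereoToFun v x, ?_, congrArg Subtype.val (stereo_left_inv hv (x := ⟨x, hx⟩) hxv)⟩
  have hden : 1 ≤ 1 - ⟪v, x⟫ := by linarith [show ⟪v, x⟫ ≤ 0 from hvx]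
  have hP : ‖(ℝ ∙ v)ᗮ.orthogonalProjectionOnto x‖ ≤ 1 :=
    ((ℝ ∙ v)ᗮ.norm_orthogonalProjectionOnto_apply_le x).trans_eq (mem_sphere_zero_iff_norm.1 hx)
  rw [mem_closedBall_zero_iff, stereoToFun_apply, innerSL_apply_apply, norm_smul,
    Real.norm_of_nonneg (by positivity)]
  calc 2 / (1 - ⟪v, x⟫) * ‖(ℝ ∙ v)ᗮ.orthogonalProjectionOnto x‖ ≤ 2 / 1 * 1 := by gcongr
    _ = 2 := by norm_num

theorem hausdorffMeasure_sphere_inter_inner_nonpos_lt_top [MeasurableSpace E] [BorelSpace E]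
    {d : ℕ} (hd : finrank ℝ E = d + 1) (hv : ‖v‖ = 1) :
    μH[d] (sphere (0 : E) 1 ∩ {x | ⟪v, x⟫ ≤ 0}) < ∞ := by
  have : FiniteDimensional ℝ E := .of_finrank_eq_succ hd
  refine (measure_mono (sphere_inter_inner_nonpos_subset hv)).trans_lt ?_
  rw [← finrank_orthogonal_span_singleton_of_norm_eq_one hd hv]
  exact (contDiff_stereoInvFunAux.comp (ℝ ∙ v)ᗮ.subtypeL.contDiff).hausdorffMeasure_image_lt_top
    (isCompact_closedBall _ _)

theorem hausdorffMeasure_sphere_lt_top [MeasurableSpace E] [BorelSpace E] {d : ℕ}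
    (hd : finrank ℝ E = d + 1) : μH[d] (sphere (0 : E) 1) < ∞ := by
  have : Nontrivial E := Module.nontrivial_of_finrank_eq_succ hd
  obtain ⟨v, hv⟩ := exists_norm_eq E zero_le_one
  have hcover : sphere (0 : E) 1 ⊆
      (sphere 0 1 ∩ {x | ⟪v, x⟫ ≤ 0}) ∪ (sphere 0 1 ∩ {x | ⟪-v, x⟫ ≤ 0}) := by
    intro x hx
    rcases le_total ⟪v, x⟫ 0 with h | h
    · exact Or.inl ⟨hx, h⟩
    · exact Or.inr ⟨hx, by simpa [inner_neg_left] using h⟩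
  refine (measure_mono hcover).trans_lt ((measure_union_le _ _).trans_lt ?_)
  exact ENNReal.add_lt_top.2 ⟨hausdorffMeasure_sphere_inter_inner_nonpos_lt_top hd hv,
    hausdorffMeasure_sphere_inter_inner_nonpos_lt_top hd (by rwa [norm_neg])⟩

theorem ball_subset_orthogonalProjectionOnto_image_sphere (hv : ‖v‖ = 1) :
    ball (0 : (ℝ ∙ v)ᗮ) 1 ⊆ (ℝ ∙ v)ᗮ.orthogonalProjectionOnto '' sphere (0 : E) 1 := by
  intro u hu
  rw [mem_ball_zero_iff] at hu
  have hvu : ⟪(u : E), v⟫ = 0 :=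
    Submodule.inner_left_of_mem_orthogonal (Submodule.mem_span_singleton_self v) u.2
  refine ⟨u + √(1 - ‖u‖ ^ 2) • v, ?_, ?_⟩
  · rw [mem_sphere_zero_iff_norm, ← sq_eq_sq₀ (norm_nonneg _) zero_le_one, norm_add_sq_real,
      inner_smul_right, hvu, norm_smul, mul_pow, hv, Real.norm_eq_abs, sq_abs,
      Real.sq_sqrt (by nlinarith [norm_nonneg u])]
    simp
  · simp [Submodule.orthogonalProjectionOnto_orthogonalComplement_singleton_eq_zero]

theorem hausdorffMeasure_sphere_pos [MeasurableSpace E] [BorelSpace E] {d : ℕ}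
    (hd : finrank ℝ E = d + 1) : 0 < μH[d] (sphere (0 : E) 1) := by
  have : Nontrivial E := Module.nontrivial_of_finrank_eq_succ hd
  obtain ⟨v, hv⟩ := exists_norm_eq E zero_le_one
  have : FiniteDimensional ℝ E := .of_finrank_eq_succ hd
  rw [← finrank_orthogonal_span_singleton_of_norm_eq_one hd hv]
  refine (ℝ ∙ v)ᗮ.lipschitzWith_orthogonalProjectionOnto.hausdorffMeasure_pos_of_interior_image ?_
  exact ⟨0, interior_maximal (ball_subset_orthogonalProjectionOnto_image_sphere hv) isOpen_ball
    (mem_ball_self one_pos)⟩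

end

variable {α E : Type*} [MeasurableSpace α] {μ : Measure α} {p : α → α → ℝ}

structure IsSymmetricMarkovDensity (μ : Measure α) (p : α → α → ℝ) : Prop where
  aestronglyMeasurable : AEStronglyMeasurable (uncurry p) (μ.prod μ)
  symm : ∀ ω ω', p ω ω' = p ω' ω
  nonneg : ∀ᵐ w ∂μ.prod μ, 0 ≤ p w.1 w.2
  integral_eq_one : ∀ᵐ ω ∂μ, ∫ ω', p ω ω' ∂μ = 1

namespace IsSymmetricMarkovDensity

theorem ae_integrable (hp : IsSymmetricMarkovDensity μ p) : ∀ᵐ ω ∂μ, Integrable (p ω) μ := by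
  filter_upwards [hp.integral_eq_one] with ω h
  by_contra hint
  rw [integral_undef hint] at h
  exact zero_ne_one h

theorem ae_ae_nonneg [SFinite μ] (hp : IsSymmetricMarkovDensity μ p) :
    ∀ᵐ ω ∂μ, ∀ᵐ ω' ∂μ, 0 ≤ p ω ω' :=
  Measure.ae_ae_of_ae_prod hp.nonneg

end IsSymmetricMarkovDensity

section NormedAddCommGroup

variable [NormedAddCommGroup E] {Ω : α → E}

def dirichletForm (μ : Measure α) (p : α → α → ℝ) (Ω : α → E) : ℝ :=
  ∫ ω, ∫ ω', p ω ω' * ‖Ω ω - Ω ω'‖ ^ 2 ∂μ ∂μ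

namespace IsSymmetricMarkovDensity

variable [SFinite μ]

theorem integrable_mul_norm_sq_fst (hp : IsSymmetricMarkovDensity μ p) (hΩ : MemLp Ω 2 μ) :
    Integrable (fun w : α × α => p w.1 w.2 * ‖Ω w.1‖ ^ 2) (μ.prod μ) := by
  have hm : AEStronglyMeasurable (fun w : α × α => p w.1 w.2 * ‖Ω w.1‖ ^ 2) (μ.prod μ) :=
    hp.aestronglyMeasurable.mul (hΩ.aestronglyMeasurable.comp_fst.norm.pow 2)
  refine (integrable_prod_iff hm).2 ⟨?_, ?_⟩
  · filter_upwards [hp.ae_integrable] with ω hω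
    exact hω.mul_const _
  · refine hΩ.integrable_norm_pow two_ne_zero |>.congr ?_
    filter_upwards [hp.integral_eq_one, hp.ae_ae_nonneg] with ω h1 h0
    rw [← integral_congr_ae (h0.mono fun ω' h => (Real.norm_of_nonneg (by positivity)).symm),
      integral_mul_const, h1, one_mul]

theorem integrable_mul_norm_sq_snd (hp : IsSymmetricMarkovDensity μ p) (hΩ : MemLp Ω 2 μ) :
    Integrable (fun w : α × α => p w.1 w.2 * ‖Ω w.2‖ ^ 2) (μ.prod μ) :=
  (hp.integrable_mul_norm_sq_fst hΩ).swap.congr (.of_forall fun w => by simp [hp.symm w.2 w.1])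

theorem integrable_mul_norm_sub_sq (hp : IsSymmetricMarkovDensity μ p) (hΩ : MemLp Ω 2 μ) :
    Integrable (fun w : α × α => p w.1 w.2 * ‖Ω w.1 - Ω w.2‖ ^ 2) (μ.prod μ) := by
  refine (((hp.integrable_mul_norm_sq_fst hΩ).add (hp.integrable_mul_norm_sq_snd hΩ)).const_mul 2)
    |>.mono' ?_ ?_
  · exact hp.aestronglyMeasurable.mul
      ((hΩ.aestronglyMeasurable.comp_fst.sub hΩ.aestronglyMeasurable.comp_snd).norm.pow 2)
  · filter_upwards [hp.nonneg] with w hw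
    have h := (pow_le_pow_left₀ (norm_nonneg _) (norm_sub_le (Ω w.1) (Ω w.2)) 2).trans add_sq_le
    rw [Real.norm_of_nonneg (by positivity), Pi.add_apply]
    linarith [mul_le_mul_of_nonneg_left h hw]

theorem dirichletForm_nonneg (hp : IsSymmetricMarkovDensity μ p) : 0 ≤ dirichletForm μ p Ω :=
  integral_nonneg_of_ae <| hp.ae_ae_nonneg.mono fun _ h =>
    integral_nonneg_of_ae <| h.mono fun _ h => by positivity

theorem dirichletForm_eq_integral_prod (hp : IsSymmetricMarkovDensity μ p) (hΩ : MemLp Ω 2 μ) :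
    dirichletForm μ p Ω = ∫ w : α × α, p w.1 w.2 * ‖Ω w.1 - Ω w.2‖ ^ 2 ∂μ.prod μ :=
  (integral_prod _ (hp.integrable_mul_norm_sub_sq hΩ)).symm

end IsSymmetricMarkovDensity

variable [NormedSpace ℝ E]

def scatteringOp (μ : Measure α) (p : α → α → ℝ) (Ω : α → E) (ω : α) : E :=
  ∫ ω', p ω ω' • (Ω ω - Ω ω') ∂μ

namespace IsSymmetricMarkovDensity

variable [SFinite μ]

theorem ae_integrable_smul_sub (hp : IsSymmetricMarkovDensity μ p) (hΩ : MemLp Ω 2 μ) :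
    ∀ᵐ ω ∂μ, Integrable (fun ω' => p ω ω' • (Ω ω - Ω ω')) μ := by
  filter_upwards [(hp.integrable_mul_norm_sub_sq hΩ).prod_right_ae, hp.ae_integrable,
    hp.ae_ae_nonneg] with ω hsq hint h0
  refine (hint.add hsq).mono' (hint.aestronglyMeasurable.smul
    (aestronglyMeasurable_const.sub hΩ.aestronglyMeasurable)) ?_
  filter_upwards [h0] with ω' hp0
  rw [norm_smul, Real.norm_of_nonneg hp0, Pi.add_apply, ← mul_one_add]
  exact mul_le_mul_of_nonneg_left (by nlinarith [sq_nonneg (‖Ω ω - Ω ω'‖ - 1)]) hp0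

theorem ae_scatteringOp_eq_zero_of_dirichletForm_eq_zero (hp : IsSymmetricMarkovDensity μ p)
    (hΩ : MemLp Ω 2 μ) (hpos : ∀ᵐ w ∂μ.prod μ, 0 < p w.1 w.2) (h : dirichletForm μ p Ω = 0) :
    ∀ᵐ ω ∂μ, scatteringOp μ p Ω ω = 0 := by
  rw [hp.dirichletForm_eq_integral_prod hΩ, integral_eq_zero_iff_of_nonneg_ae
    (hp.nonneg.mono fun w hw => by positivity) (hp.integrable_mul_norm_sub_sq hΩ)] at h
  have hconst : ∀ᵐ w ∂μ.prod μ, Ω w.1 = Ω w.2 := by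
    filter_upwards [h, hpos] with w hw hpw
    simpa [hpw.ne', sub_eq_zero] using hw
  filter_upwards [Measure.ae_ae_of_ae_prod hconst] with ω hω
  have : (fun ω' => p ω ω' • (Ω ω - Ω ω')) =ᵐ[μ] fun _ => 0 := hω.mono fun ω' h => by simp [h]
  rw [scatteringOp, integral_congr_ae this, integral_zero]

end IsSymmetricMarkovDensity

end NormedAddCommGroup

theorem IsSymmetricMarkovDensity.integral_inner_scatteringOp_self [NormedAddCommGroup E]
    [InnerProductSpace ℝ E] [CompleteSpace E] [SFinite μ] {Ω : α → E}
    (hp : IsSymmetricMarkovDensity μ p) (hΩ : MemLp Ω 2 μ) :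
    ∫ ω, ⟪scatteringOp μ p Ω ω, Ω ω⟫ ∂μ = dirichletForm μ p Ω / 2 := by
  have hpt : ∀ᵐ ω ∂μ,
      ⟪scatteringOp μ p Ω ω, Ω ω⟫ = ∫ ω', p ω ω' * ⟪Ω ω - Ω ω', Ω ω⟫ ∂μ := by
    filter_upwards [hp.ae_integrable_smul_sub hΩ] with ω hω
    rw [scatteringOp, real_inner_comm, ← integral_inner hω]
    simp_rw [real_inner_smul_right, real_inner_comm (Ω ω)]
  -- polarization; the `‖Ω ω‖²` and `‖Ω ω'‖²` terms have equal integrals by the symmetry of `p`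
  have hpol : ∀ w : α × α, p w.1 w.2 * ⟪Ω w.1 - Ω w.2, Ω w.1⟫ =
      (p w.1 w.2 * ‖Ω w.1 - Ω w.2‖ ^ 2 + p w.1 w.2 * ‖Ω w.1‖ ^ 2 - p w.1 w.2 * ‖Ω w.2‖ ^ 2) / 2 := by
    intro w
    rw [real_inner_eq_norm_mul_self_add_norm_mul_self_sub_norm_sub_mul_self_div_two,
      sub_sub_cancel_left, norm_neg]
    ring
  have hA := hp.integrable_mul_norm_sub_sq hΩ
  have hB := hp.integrable_mul_norm_sq_fst hΩ
  have hC := hp.integrable_mul_norm_sq_snd hΩ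
  have hswap : ∫ w : α × α, p w.1 w.2 * ‖Ω w.2‖ ^ 2 ∂μ.prod μ
      = ∫ w : α × α, p w.1 w.2 * ‖Ω w.1‖ ^ 2 ∂μ.prod μ := by
    rw [← integral_prod_swap]
    simp only [Prod.fst_swap, Prod.snd_swap, hp.symm]
  calc ∫ ω, ⟪scatteringOp μ p Ω ω, Ω ω⟫ ∂μ
      = ∫ ω, ∫ ω', p ω ω' * ⟪Ω ω - Ω ω', Ω ω⟫ ∂μ ∂μ := integral_congr_ae hpt
    _ = ∫ w : α × α, p w.1 w.2 * ⟪Ω w.1 - Ω w.2, Ω w.1⟫ ∂μ.prod μ :=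
        (integral_prod _ ((((hA.fun_add hB).sub hC).div_const 2).congr
          (.of_forall fun w => (hpol w).symm))).symm
    _ = dirichletForm μ p Ω / 2 := by
        simp_rw [hpol]
        rw [integral_div, integral_sub (hA.fun_add hB) hC, integral_add hA hB, hswap,
          hp.dirichletForm_eq_integral_prod hΩ]
        ring

instance (d : ℕ) : IsFiniteMeasure (sphμ d) :=
  ⟨by rw [sphμ, Measure.restrict_apply_univ]
      exact hausdorffMeasure_sphere_lt_top finrank_euclideanSpace_fin⟩

instance (d : ℕ) : NeZero (sphμ d) :=
  ⟨Measure.measure_univ_pos.1 <| by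
    rw [sphμ, Measure.restrict_apply_univ]
    exact hausdorffMeasure_sphere_pos finrank_euclideanSpace_fin⟩

theorem ae_mem_sphere_sphμ (d : ℕ) : ∀ᵐ ω ∂sphμ d, ω ∈ sphere (0 : Esp d) 1 :=
  ae_restrict_mem isClosed_sphere.measurableSet

theorem stmt6_general (d : ℕ) (p : Esp d → Esp d → ℝ)
    (hmeas : Measurable (Function.uncurry p))
    (hsymm : ∀ ω ω', p ω ω' = p ω' ω)
    (hpos : ∀ᵐ w ∂((sphμ d).prod (sphμ d)), 0 < p w.1 w.2)
    (hnorm : ∀ᵐ ω ∂(sphμ d), ∫ ω', p ω ω' ∂(sphμ d) = 1)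
    (Ω : Esp d → Esp d) (hΩ2 : MemLp Ω 2 (sphμ d))
    (hΩL : ∀ᵐ ω ∂(sphμ d), (∫ ω', p ω ω' • (Ω ω - Ω ω') ∂(sphμ d)) = ω) :
    (∫ ω, ⟪ω, Ω ω⟫ ∂(sphμ d)) / ((sphμ d) univ).toReal
        = (1 / (2 * ((sphμ d) univ).toReal))
          * ∫ ω, ∫ ω', p ω ω' * ‖Ω ω - Ω ω'‖^2 ∂(sphμ d) ∂(sphμ d) ∧
    0 < (∫ ω, ⟪ω, Ω ω⟫ ∂(sphμ d)) / ((sphμ d) univ).toReal := by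
  have hp : IsSymmetricMarkovDensity (sphμ d) p :=
    ⟨hmeas.aestronglyMeasurable, hsymm, hpos.mono fun _ h => h.le, hnorm⟩
  have hdiff : ∫ ω, ⟪ω, Ω ω⟫ ∂sphμ d = dirichletForm (sphμ d) p Ω / 2 := by
    rw [← hp.integral_inner_scatteringOp_self hΩ2]
    exact integral_congr_ae (hΩL.mono fun ω h => congrArg (⟪·, Ω ω⟫) h.symm)
  have hD : 0 < dirichletForm (sphμ d) p Ω := by
    refine hp.dirichletForm_nonneg.lt_of_ne' fun h0 => ?_
    have hzero : ∀ᵐ ω ∂sphμ d, ω ∈ sphere (0 : Esp d) 1 ∧ ω = 0 := by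
      filter_upwards [ae_mem_sphere_sphμ d, hΩL,
        hp.ae_scatteringOp_eq_zero_of_dirichletForm_eq_zero hΩ2 hpos h0] with ω hs h1 h2
      exact ⟨hs, h1.symm.trans h2⟩
    obtain ⟨ω, hs, rfl⟩ := hzero.exists
    simp at hs
  have hS : 0 < (sphμ d univ).toReal :=
    ENNReal.toReal_pos (NeZero.ne _) (measure_ne_top _ _)
  rw [hdiff]
  refine ⟨?_, by positivity⟩
  rw [dirichletForm]
  field_simp

/-- the diffusion coefficient `⟨ω·Ω⟩` equals
`(1/(2|S^d|)) ∬ p(ω,ω')|Ω(ω) − Ω(ω')|² dωdω'` and is strictly positive. -/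
theorem stmt6 (d : ℕ) (p : Esp d → Esp d → ℝ)
    (hmeas : Measurable (Function.uncurry p))
    (hsymm : ∀ ω ω', p ω ω' = p ω' ω)
    (hpos : ∀ᵐ w ∂((sphμ d).prod (sphμ d)), 0 < p w.1 w.2)
    (hnorm : ∀ᵐ ω ∂(sphμ d), ∫ ω', p ω ω' ∂(sphμ d) = 1)
    (hp2 : MemLp (Function.uncurry p) 2 ((sphμ d).prod (sphμ d)))
    (Ω : Esp d → Esp d) (hΩ2 : MemLp Ω 2 (sphμ d))
    (hΩ0 : (∫ ω, Ω ω ∂(sphμ d)) = 0)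
    (hΩL : ∀ᵐ ω ∂(sphμ d), (∫ ω', p ω ω' • (Ω ω - Ω ω') ∂(sphμ d)) = ω) :
    (∫ ω, ⟪ω, Ω ω⟫ ∂(sphμ d)) / ((sphμ d) univ).toReal
        = (1 / (2 * ((sphμ d) univ).toReal))
          * ∫ ω, ∫ ω', p ω ω' * ‖Ω ω - Ω ω'‖^2 ∂(sphμ d) ∂(sphμ d) ∧
    0 < (∫ ω, ⟪ω, Ω ω⟫ ∂(sphμ d)) / ((sphμ d) univ).toReal :=
  stmt6_general d p hmeas hsymm hpos hnorm Ω hΩ2 hΩL
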